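/- Let s be the standard episturmian word with directive word Δ(s) = y_1^{d_1} y_2^{d_2} ⋯ (y_i ≠ y_{i+1}, d_i > 0). Then the Ziv-Lempel factorization of s is z(s) = (z_1, z_2, …) with z_1 = y_1 and z_k = y_{k-1}^{-1} (\bar{h_{g(k-1)-1}})^{d_{k-1}} y_k for k ≥ 2, i.e., z_k is obtained from (\bar{h_{g(k-1)-1}})^{d_{k-1}} by removing its first letter y_{k-1} and appending y_k. -/

import Mathlib

/-!
The palindromic closure of `u_{n+1} c` is `μ_n(c) u_{n+1}`: this word is a palindrome with that
prefix since `μ_n(c) u_{n+1} = u_{n+1} \bar{μ_n(c)}`, and a shorter palindrome would leave a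
palindromic suffix `c u_j c` of `u_{n+1} c`, forcing `c = x_j` and contradicting
`|μ_n(x_j)| + |u_j| ≤ |u_{n+1}|`. This gives Justin's formula `u_{n+1} = h_{n-1} u_n`.

Along the `k`-th block of the directive word, `h` stays equal to `H = h_{g(k)-1}`, so
`u_{g(k+1)} = H^{d_k} u_{g(k)} = u_{g(k)} \bar{H}^{d_k}` and `z_1 ⋯ z_k = u_{g(k)} y_k`.
Being a prefix of `H u_{g(k+1)}`, the word `u_{g(k+1)}` has period `|H|`, so all its factors of
length `|H|` are rotations of `H = H' y_k`. The suffix `\bar{H'} y_{k+1}` of `z_{k+1}` has the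
wrong letter count for that, so `z_{k+1}` occurs only at the end of `z_1 ⋯ z_{k+1}`, while its
proper prefixes, being prefixes of the tail of `\bar{H}^{d_k}`, also occur `|H|` letters earlier.
-/

variable {A : Type*} [DecidableEq A]

/-- `psiW a` is the morphism with `ψ_a(a) = a` and `ψ_a(x) = ax` for `x ≠ a`. -/
def psiW (a : A) (w : List A) : List A :=
  w.flatMap (fun b => if b = a then [a] else [a, b])

/-- `muW x n = ψ_{x 1} ∘ ⋯ ∘ ψ_{x n}`. -/
def muW (x : ℕ → A) : ℕ → List A → List A
  | 0 => id
  | n + 1 => fun w => muW x n (psiW (x (n + 1)) w)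

/-- `hW x n = μ_n (x_{n+1})`. -/
def hW (x : ℕ → A) (n : ℕ) : List A := muW x n [x (n + 1)]

/-- `p` is the palindromic right-closure of `w`: the shortest palindrome having `w`
as a prefix. -/
def IsPalClosure (w p : List A) : Prop :=
  w <+: p ∧ p.reverse = p ∧
    ∀ q : List A, w <+: q → q.reverse = q → p.length ≤ q.length

/-- The finite word `w` is a prefix of the infinite word `s`. -/
def PrefInf (w : List A) (s : ℕ → A) : Prop :=
  ∀ i : ℕ, ∀ h : i < w.length, w[i] = s i

/-- Number of occurrences (positions) of `w` as a factor of `v`. -/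
def occ (w v : List A) : ℕ :=
  (List.range (v.length + 1)).countP
    (fun i => decide (i + w.length ≤ v.length ∧ (v.drop i).take w.length = w))

/-- `cat z k = z 1 ++ z 2 ++ ⋯ ++ z k`. -/
def cat (z : ℕ → List A) (k : ℕ) : List A := ((List.range' 1 k).map z).flatten

/-- `z` is the Ziv-Lempel factorization of the infinite word `s`: each `z m` is
the shortest prefix of `z m · z (m+1) ⋯` occurring only once in `z 1 ⋯ z m`. -/
def IsZFact (s : ℕ → A) (z : ℕ → List A) : Prop :=
  ∀ m : ℕ, 1 ≤ m → z m ≠ [] ∧ PrefInf (cat z m) s ∧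
    occ (z m) (cat z m) = 1 ∧
    ∀ p : List A, p <+: z m → p ≠ z m → 2 ≤ occ p (cat z m)

/-- `c` is the Crochemore factorization of the infinite word `s`: each `c m` is
either a fresh letter, or the longest prefix of `c m · c (m+1) ⋯` occurring
twice in `c 1 ⋯ c m`. -/
def IsCFact (s : ℕ → A) (c : ℕ → List A) : Prop :=
  ∀ m : ℕ, 1 ≤ m → c m ≠ [] ∧ PrefInf (cat c m) s ∧
    ((∃ a : A, c m = [a] ∧ a ∉ cat c (m - 1)) ∨
      (2 ≤ occ (c m) (cat c m) ∧
        occ (c m ++ [s (cat c m).length]) (cat c m ++ [s (cat c m).length]) = 1))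

section Words

variable {α : Type*}

section Palindromes

variable {w p q T : List α} {c : α}

theorem IsPalClosure.unique (hp : IsPalClosure w p) (hq : IsPalClosure w q) : p = q := by
  obtain ⟨hwp, hp, hpmin⟩ := hp
  obtain ⟨hwq, hq, hqmin⟩ := hq
  have hlen : p.length = q.length := le_antisymm (hpmin q hwq hq) (hqmin p hwp hp)
  have hle : p.length ≤ 2 * w.length := by
    simpa [two_mul] using hpmin (w ++ w.reverse) (List.prefix_append _ _) (by simp)
  apply List.ext_getElem hlen
  intro i hip hiq
  by_cases hi : i < w.length
  · rw [← hwp.getElem hi, ← hwq.getElem hi]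
  · rw [List.getElem_of_eq hp.symm hip, List.getElem_of_eq hq.symm hiq, List.getElem_reverse,
      List.getElem_reverse, ← hwp.getElem (by omega), ← hwq.getElem (by omega)]
    simp only [hlen]

theorem reverse_drop_eq_of_prefix (hwq : w <+: q) (hq : q.reverse = q) :
    (w.drop (q.length - w.length)).reverse = w.drop (q.length - w.length) := by
  obtain ⟨t, rfl⟩ := hwq
  by_cases ht : w.length ≤ t.length
  · simp [List.drop_eq_nil_of_le (by simpa using ht)]
  have key : w.drop t.length ++ t = (w.drop t.length).reverse ++ (w.take t.length).reverse := by
    have := congrArg (List.drop t.length) hq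
    rw [List.drop_append_of_le_length (by omega), List.reverse_append,
      List.drop_append_of_le_length (by simp), List.drop_eq_nil_of_le (by simp),
      List.nil_append] at this
    rw [← List.reverse_append, List.take_append_drop, this]
  simp only [List.length_append, Nat.add_sub_cancel_left]
  exact (List.append_inj key (by simp)).1.symm

theorem exists_palindrome_of_cons (hT : T ≠ []) (h : (c :: T).reverse = c :: T) :
    ∃ P : List α, P.reverse = P ∧ T = P ++ [c] := by
  obtain ⟨P, b, rfl⟩ := (List.eq_nil_or_concat' T).resolve_left hT
  simp only [List.reverse_cons, List.reverse_append, List.reverse_nil, List.nil_append,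
    List.cons_append, List.cons.injEq, List.append_singleton_inj] at h
  obtain ⟨rfl, hP, -⟩ := h
  exact ⟨P, hP, rfl⟩

theorem exists_palindrome_append_prefix {U : List α} (hU : U.reverse = U)
    (hq : U ++ [c] <+: q) (hqpal : q.reverse = q) (hlen : q.length ≤ 2 * U.length) :
    ∃ P : List α, P.reverse = P ∧ P ++ [c] <+: U ∧ P.length + q.length = 2 * U.length := by
  have hqU : U.length + 1 ≤ q.length := by simpa using hq.length_le
  -- `q` folds `U ++ [c]` onto itself; reversed, the part left over is a palindrome `c :: T`
  have hS := reverse_drop_eq_of_prefix hq hqpal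
  rw [List.length_append, List.length_singleton,
    List.drop_append_of_le_length (by omega)] at hS
  generalize hk : q.length - (U.length + 1) = k at hS
  have hT : (c :: (U.drop k).reverse).reverse = c :: (U.drop k).reverse := by
    rw [List.reverse_cons, List.reverse_reverse, ← hS]
    simp
  obtain ⟨P, hPpal, hTP⟩ := exists_palindrome_of_cons (by simp; omega) hT
  refine ⟨P, hPpal, ?_, ?_⟩
  · rw [← hTP]
    simpa only [hU] using List.reverse_prefix.mpr (List.drop_suffix k U)
  · have := congrArg List.length hTP
    simp only [List.length_reverse, List.length_drop, List.length_append,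
      List.length_singleton] at this
    omega

end Palindromes

section Periodicity

variable {H w Q : List α}

theorem drop_one_prefix_rotate_one_append (h : w <+: H ++ w) :
    w.drop 1 <+: H.rotate 1 ++ w.drop 1 := by
  rcases H with _ | ⟨a, H⟩
  · simp
  rcases w with _ | ⟨b, w⟩
  · simp
  rw [List.cons_append, List.cons_prefix_cons] at h
  obtain ⟨rfl, h⟩ := h
  simpa [List.rotate_cons_succ] using h

theorem drop_prefix_rotate_append (h : w <+: H ++ w) (n : ℕ) :
    w.drop n <+: H.rotate n ++ w.drop n := by
  induction n with
  | zero => simpa using h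
  | succ n ih =>
    simpa only [List.drop_drop, List.rotate_rotate] using drop_one_prefix_rotate_one_append ih

/-- `w <+: H ++ w` says that `w` has period `|H|`; its factors of length `|H|` are then rotations
of `H`. -/
theorem perm_of_infix_of_prefix_append (h : w <+: H ++ w) (hQ : Q <:+: w)
    (hlen : Q.length = H.length) : Q.Perm H := by
  obtain ⟨s, t, rfl⟩ := hQ
  have hrot := drop_prefix_rotate_append h s.length
  rw [List.append_assoc, List.drop_left] at hrot
  have hQH : Q <+: H.rotate s.length :=
    List.prefix_of_prefix_length_le ((List.prefix_append Q t).trans hrot)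
      (List.prefix_append _ _) (by simp [hlen])
  rw [hQH.eq_of_length (by simp [hlen])]
  exact List.rotate_perm _ _

end Periodicity

theorem append_flatten_replicate_comm (l : List α) (d : ℕ) :
    l ++ (List.replicate d l).flatten = (List.replicate d l).flatten ++ l := by
  rw [← List.flatten_cons, ← List.replicate_succ, List.replicate_succ', List.flatten_append,
    List.flatten_singleton]

theorem flatten_replicate_append_comm {H H' W : List α} (h : H ++ W = W ++ H')
    (d : ℕ) : (List.replicate d H).flatten ++ W = W ++ (List.replicate d H').flatten := by
  induction d with
  | zero => simp
  | succ d ih =>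
    simp only [List.replicate_succ, List.flatten_cons]
    rw [List.append_assoc, ih, ← List.append_assoc, h, List.append_assoc]

theorem drop_length_add_one_append_singleton {W R : List α} {b : α} (hR : R ≠ []) :
    (W ++ R ++ [b]).drop (W.length + 1) = R.tail ++ [b] := by
  rw [List.append_assoc, List.drop_length_add_append, List.drop_one,
    List.tail_append_of_ne_nil hR]

theorem cat_one (z : ℕ → List α) : cat z 1 = z 1 := by
  simp [cat]

theorem cat_succ (z : ℕ → List α) (k : ℕ) : cat z (k + 1) = cat z k ++ z (k + 1) := by
  simp [cat, List.range'_concat, Nat.add_comm]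

theorem PrefInf.of_prefix {v w : List α} {s : ℕ → α} (h : w <+: v)
    (hv : PrefInf v s) : PrefInf w s :=
  fun i hi => (h.getElem hi).trans (hv i _)

end Words

theorem psiW_append (a : A) (v w : List A) : psiW a (v ++ w) = psiW a v ++ psiW a w := by
  simp [psiW]

theorem muW_append (x : ℕ → A) (n : ℕ) (v w : List A) :
    muW x n (v ++ w) = muW x n v ++ muW x n w := by
  induction n generalizing v w with
  | zero => rfl
  | succ n ih => simp only [muW, psiW_append, ih]

section Morphism

variable {x : ℕ → A} {n : ℕ} {c : A}

theorem muW_succ_of_eq (hc : c = x (n + 1)) : muW x (n + 1) [c] = muW x n [c] := by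
  simp [muW, psiW, hc]

theorem muW_succ_of_ne (hc : c ≠ x (n + 1)) : muW x (n + 1) [c] = hW x n ++ muW x n [c] := by
  simp [muW, psiW, hc, hW, ← muW_append]

theorem exists_muW_eq_append_singleton (x : ℕ → A) (n : ℕ) (c : A) :
    ∃ M, muW x n [c] = M ++ [c] := by
  induction n with
  | zero => exact ⟨[], rfl⟩
  | succ n ih =>
    obtain ⟨M, hM⟩ := ih
    by_cases hc : c = x (n + 1)
    · exact ⟨M, by rw [muW_succ_of_eq hc, hM]⟩
    · exact ⟨hW x n ++ M, by rw [muW_succ_of_ne hc, hM, List.append_assoc]⟩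

theorem muW_add_of_forall_eq {j : ℕ} (hx : ∀ i, n < i → i ≤ n + j → x i = c) :
    muW x (n + j) [c] = muW x n [c] := by
  induction j with
  | zero => rfl
  | succ j ih =>
    show muW x (n + j + 1) [c] = _
    rw [muW_succ_of_eq (hx _ (by omega) (by omega)).symm]
    exact ih fun i h1 h2 => hx i h1 (by omega)

end Morphism

/-- `palW x n` is the palindromic prefix `u_{n+1}`, built by Justin's formula
`u_{n+2} = h_n u_{n+1}`. -/
def palW (x : ℕ → A) : ℕ → List A
  | 0 => []
  | n + 1 => hW x n ++ palW x n

section JustinFormula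

variable (x : ℕ → A)

theorem muW_append_palW (n : ℕ) (c : A) :
    muW x n [c] ++ palW x n = palW x n ++ (muW x n [c]).reverse := by
  induction n generalizing c with
  | zero => simp [muW, palW]
  | succ n ih =>
    have hh : hW x n ++ palW x n = palW x n ++ (hW x n).reverse := ih (x (n + 1))
    by_cases hc : c = x (n + 1)
    · subst hc
      rw [muW_succ_of_eq rfl, palW, ← hW]
      exact (congrArg (hW x n ++ ·) hh).trans (List.append_assoc _ _ _).symm
    · rw [muW_succ_of_ne hc, palW, List.reverse_append]
      calc hW x n ++ muW x n [c] ++ (hW x n ++ palW x n)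
          = hW x n ++ ((muW x n [c] ++ palW x n) ++ (hW x n).reverse) := by
            simp only [hh, List.append_assoc]
        _ = hW x n ++ palW x n ++ ((muW x n [c]).reverse ++ (hW x n).reverse) := by
            simp only [ih, List.append_assoc]

theorem palW_succ_eq_append (n : ℕ) : palW x (n + 1) = palW x n ++ (hW x n).reverse :=
  muW_append_palW x n (x (n + 1))

theorem reverse_palW (n : ℕ) : (palW x n).reverse = palW x n := by
  induction n with
  | zero => rfl
  | succ n ih =>
    conv_lhs => rw [palW_succ_eq_append, List.reverse_append, ih, List.reverse_reverse]
    rfl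

theorem palW_append_prefix (n : ℕ) : palW x n ++ [x (n + 1)] <+: palW x (n + 1) := by
  obtain ⟨M, hM⟩ := exists_muW_eq_append_singleton x n (x (n + 1))
  rw [palW_succ_eq_append, hW, hM]
  simp

theorem palW_prefix_of_le {m n : ℕ} (h : m ≤ n) : palW x m <+: palW x n := by
  induction n, h using Nat.le_induction with
  | base => exact List.prefix_rfl
  | succ n _ ih => exact ih.trans ((List.prefix_append _ _).trans (palW_append_prefix x n))

theorem length_muW_le (n : ℕ) (c : A) : (muW x n [c]).length ≤ (palW x n).length + 1 := by
  induction n with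
  | zero => simp [muW]
  | succ n ih =>
    by_cases hc : c = x (n + 1)
    · rw [muW_succ_of_eq hc, palW, List.length_append]
      omega
    · rw [muW_succ_of_ne hc, palW, List.length_append, List.length_append]
      omega

theorem length_muW_add_length_palW_le {i n : ℕ} (h : i < n) :
    (muW x n [x (i + 1)]).length + (palW x i).length ≤ (palW x n).length := by
  induction n, h using Nat.le_induction with
  | base => simp [muW_succ_of_eq, palW, hW]
  | succ n hin ih =>
    have hmono := (palW_prefix_of_le x (Nat.le_of_succ_le hin)).length_le
    by_cases hc : x (i + 1) = x (n + 1)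
    · rw [muW_succ_of_eq hc, hc, palW, List.length_append, ← hW]
      omega
    · rw [muW_succ_of_ne hc, palW, List.length_append, List.length_append]
      omega

theorem palW_add_of_forall_eq {n j : ℕ} {a : A}
    (hx : ∀ i, n < i → i ≤ n + j → x i = a) :
    palW x (n + j) = (List.replicate j (muW x n [a])).flatten ++ palW x n := by
  induction j with
  | zero => simp
  | succ j ih =>
    show hW x (n + j) ++ palW x (n + j) = _
    rw [hW, hx (n + j + 1) (by omega) (by omega),
      muW_add_of_forall_eq fun i h1 _ => hx i h1 (by omega), ih fun i h1 _ => hx i h1 (by omega),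
      List.replicate_succ, List.flatten_cons, List.append_assoc]

end JustinFormula

/-- `u` lists the palindromic prefixes `u_1 = ε`, `u_{n+1} = (u_n x_n)⁺` of the standard
episturmian word with directive word `x`. -/
structure IsPalPrefixSeq {α : Type*} (x : ℕ → α) (u : ℕ → List α) : Prop where
  one : u 1 = []
  closure : ∀ n, 1 ≤ n → IsPalClosure (u n ++ [x n]) (u (n + 1))

namespace IsPalPrefixSeq

section General

variable {α : Type*} {x : ℕ → α} {u : ℕ → List α}

theorem prefix_succ (hu : IsPalPrefixSeq x u) {n : ℕ} (hn : 1 ≤ n) : u n <+: u (n + 1) :=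
  (List.prefix_append _ _).trans (hu.closure n hn).1

theorem exists_eq_of_palindrome_prefix (hu : IsPalPrefixSeq x u) {n : ℕ} (hn : 1 ≤ n)
    {P : List α} (hP : P.reverse = P) (hPu : P <+: u n) :
    ∃ j, 1 ≤ j ∧ j ≤ n ∧ P = u j := by
  induction n, hn using Nat.le_induction generalizing P with
  | base => exact ⟨1, le_rfl, le_rfl, hu.one ▸ List.prefix_nil.mp (hu.one ▸ hPu)⟩
  | succ n hn ih =>
    by_cases hlen : P.length ≤ (u n).length
    · obtain ⟨j, hj1, hjn, rfl⟩ :=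
        ih hP (List.prefix_of_prefix_length_le hPu (hu.prefix_succ hn) hlen)
      exact ⟨j, hj1, by omega, rfl⟩
    · have hxP : u n ++ [x n] <+: P :=
        List.prefix_of_prefix_length_le (hu.closure n hn).1 hPu (by simp; omega)
      exact ⟨n + 1, by omega, le_rfl, hPu.eq_of_length_le ((hu.closure n hn).2.2 P hxP hP)⟩

end General

variable {x : ℕ → A} {u : ℕ → List A}

theorem length_le_of_palindrome {n : ℕ} (hu : IsPalPrefixSeq x u)
    (hA : ∀ i ≤ n, u (i + 1) = palW x i) {c : A} {q : List A} (hq : palW x n ++ [c] <+: q)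
    (hqpal : q.reverse = q) : (muW x n [c] ++ palW x n).length ≤ q.length := by
  have hMU := length_muW_le x n c
  rw [List.length_append]
  by_cases hlong : 2 * (palW x n).length + 1 ≤ q.length
  · omega
  obtain ⟨P, hPpal, hPcU, hPlen⟩ :=
    exists_palindrome_append_prefix (reverse_palW x n) hq hqpal (by omega)
  obtain ⟨j, hj1, hjn, hPj⟩ := hu.exists_eq_of_palindrome_prefix (n := n + 1) (by omega) hPpal
    (hA n le_rfl ▸ (List.prefix_append _ _).trans hPcU)
  obtain ⟨i, rfl⟩ : ∃ i, j = i + 1 := ⟨j - 1, by omega⟩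
  rw [hA i (by omega)] at hPj
  subst hPj
  have hin : i < n := by
    by_contra h
    obtain rfl : i = n := by omega
    simpa using hPcU.length_le
  have hcx : c = x (i + 1) := by
    have hxU := (palW_append_prefix x i).trans (palW_prefix_of_le x hin)
    simpa using (List.prefix_of_prefix_length_le hPcU hxU (by simp)).eq_of_length (by simp)
  have := length_muW_add_length_palW_le x hin
  rw [← hcx] at this
  omega

theorem isPalClosure_muW_append_palW {n : ℕ} (hu : IsPalPrefixSeq x u)
    (hA : ∀ i ≤ n, u (i + 1) = palW x i) (c : A) :
    IsPalClosure (palW x n ++ [c]) (muW x n [c] ++ palW x n) := by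
  have hR := muW_append_palW x n c
  obtain ⟨M, hM⟩ := exists_muW_eq_append_singleton x n c
  refine ⟨?_, ?_, fun q hq hqpal => hu.length_le_of_palindrome hA hq hqpal⟩
  · rw [hR, hM]
    simp
  · rw [List.reverse_append, reverse_palW, ← hR]

theorem eq_palW (hu : IsPalPrefixSeq x u) (n : ℕ) : u (n + 1) = palW x n := by
  induction n using Nat.strong_induction_on with
  | _ n ih =>
    cases n with
    | zero => exact hu.one
    | succ n =>
      have hA : ∀ i ≤ n, u (i + 1) = palW x i := fun i hi => ih i (by omega)
      have h := hu.closure (n + 1) (by omega)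
      rw [hA n le_rfl] at h
      exact h.unique (hu.isPalClosure_muW_append_palW hA _)

end IsPalPrefixSeq

section Occurrences

variable {v w : List A} {i : ℕ}

theorem occ_eq_countP_prefix (w v : List A) :
    occ w v = (List.range (v.length + 1)).countP (fun i => decide (w <+: v.drop i)) := by
  refine List.countP_congr fun i hi => ?_
  simp only [decide_eq_true_eq, List.mem_range] at hi ⊢
  refine ⟨fun h => List.prefix_iff_eq_take.mpr h.2.symm, fun h => ⟨?_, ?_⟩⟩
  · have := h.length_le
    simp only [List.length_drop] at this
    omega
  · exact (List.prefix_iff_eq_take.mp h).symm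

theorem two_le_occ {j : ℕ} (hij : i < j) (hj : j ≤ v.length) (hwi : w <+: v.drop i)
    (hwj : w <+: v.drop j) : 2 ≤ occ w v := by
  rw [occ_eq_countP_prefix, List.countP_eq_length_filter]
  have hsub : [i, j] ⊆ (List.range (v.length + 1)).filter (fun i => decide (w <+: v.drop i)) := by
    intro k hk
    simp only [List.mem_cons, List.not_mem_nil, or_false] at hk
    rcases hk with rfl | rfl <;> simp [hwi, hwj] <;> omega
  simpa using (List.subperm_of_subset (by simp; omega) hsub).length_le

theorem occ_eq_one (hi : i ≤ v.length) (hwi : w <+: v.drop i)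
    (huniq : ∀ j ≤ v.length, w <+: v.drop j → j = i) : occ w v = 1 := by
  rw [occ_eq_countP_prefix]
  refine (List.countP_congr fun j hj => ?_).trans
    (List.count_eq_one_of_mem List.nodup_range (List.mem_range.mpr (Nat.lt_succ_of_le hi)))
  simp only [List.mem_range, decide_eq_true_eq, beq_iff_eq] at hj ⊢
  exact ⟨huniq j (by omega), fun h => h ▸ hwi⟩

end Occurrences

def IsShortestUniquePrefix (w v : List A) : Prop :=
  w ≠ [] ∧ occ w v = 1 ∧ ∀ p : List A, p <+: w → p ≠ w → 2 ≤ occ p v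

theorem isShortestUniquePrefix_singleton (a : A) : IsShortestUniquePrefix [a] [a] := by
  refine ⟨List.cons_ne_nil _ _, by simp [occ, List.range_succ], fun p hp hne => ?_⟩
  obtain rfl : p = [] := by
    rcases List.prefix_cons_iff.mp hp with rfl | ⟨t, rfl, ht⟩
    · rfl
    · exact absurd (by rw [List.prefix_nil.mp ht]) hne
  simp [occ, List.range_succ]

section ZivLempelStep

variable {W H : List A} {b : A} {d : ℕ}

theorem occ_tail_flatten_replicate_eq_one {a : A} (hWH : H ++ W = W ++ H.reverse)
    (ha : H.getLast? = some a) (hba : b ≠ a) (hd : 0 < d) :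
    occ ((List.replicate d H.reverse).flatten.tail ++ [b])
      (W ++ (List.replicate d H.reverse).flatten ++ [b]) = 1 := by
  obtain ⟨H', rfl⟩ := List.getLast?_eq_some_iff.mp ha
  obtain ⟨d, rfl⟩ : ∃ d', d = d' + 1 := ⟨d - 1, by omega⟩
  set P := (H' ++ [a]).reverse with hP
  set R := (List.replicate (d + 1) P).flatten with hR
  have hRne : R ≠ [] := by simp [hR, hP]
  have hRlen : R.tail.length + 1 = R.length := by
    have := List.length_pos_of_ne_nil hRne
    simp only [List.length_tail]
    omega
  have hper : W ++ R <+: H' ++ [a] ++ (W ++ R) := by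
    rw [← List.append_assoc, hWH, List.append_assoc, append_flatten_replicate_comm,
      ← List.append_assoc]
    exact List.prefix_append _ _
  -- the last `|H|` letters of the factor form a word `H'ᴿ b`, which is not a rotation of `H' a`
  have hlast : H'.reverse ++ [b] <:+ R.tail ++ [b] := by
    have hRP : R = (List.replicate d P).flatten ++ [a] ++ H'.reverse := by
      rw [hR, List.replicate_succ', List.flatten_append, List.flatten_singleton, hP]
      simp
    rw [hRP, List.tail_append_of_ne_nil (by simp), List.append_assoc]
    exact List.suffix_append _ _
  refine occ_eq_one (i := W.length + 1) (by simp)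
    (by rw [drop_length_add_one_append_singleton hRne]) fun j hj hZ => ?_
  by_contra hji
  have hjW : j ≤ W.length := by
    have := hZ.length_le
    simp only [List.length_append, List.length_drop, List.length_singleton] at this hj
    omega
  have hZWR : R.tail ++ [b] <+: (W ++ R).drop j := by
    have hpre : (W ++ R).drop j <+: (W ++ R ++ [b]).drop j := by
      rw [List.drop_append_of_le_length (l₁ := W ++ R) (l₂ := [b]) (by simp; omega)]
      exact List.prefix_append _ _
    refine List.prefix_of_prefix_length_le hZ hpre ?_
    simp only [List.length_append, List.length_drop, List.length_singleton]
    omega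
  have hperm := perm_of_infix_of_prefix_append hper
    (hlast.isInfix.trans (hZWR.isInfix.trans (List.drop_suffix j _).isInfix)) (by simp)
  have hba' := (List.perm_append_left_iff H').mp
    ((H'.reverse_perm.append_right [b]).symm.trans hperm)
  exact hba (List.singleton_inj.mp (List.perm_singleton.mp hba'))

theorem two_le_occ_of_prefix_tail_flatten_replicate (hWH : H ++ W = W ++ H.reverse)
    (hH : H ≠ []) (hHW : H.length ≤ W.length + 1) (hd : 0 < d) {p : List A}
    (hp : p <+: (List.replicate d H.reverse).flatten.tail ++ [b])
    (hne : p ≠ (List.replicate d H.reverse).flatten.tail ++ [b]) :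
    2 ≤ occ p (W ++ (List.replicate d H.reverse).flatten ++ [b]) := by
  set R := (List.replicate d H.reverse).flatten with hR
  have hRne : R ≠ [] := by
    obtain ⟨d, rfl⟩ : ∃ d', d = d' + 1 := ⟨d - 1, by omega⟩
    simpa [hR] using hH
  have hpR : p <+: R.tail := by
    refine List.prefix_of_prefix_length_le hp (List.prefix_append _ _) ?_
    have := hp.length_le
    have : p.length ≠ (R.tail ++ [b]).length := fun h => hne (hp.eq_of_length h)
    simp only [List.length_append, List.length_singleton] at *
    omega
  have hHlen : 1 ≤ H.length := List.length_pos_of_ne_nil hH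
  -- `W` ends with `H.reverse.tail`, so a copy of `R.tail` starts `|H|` letters earlier
  have hWdrop : W.drop (W.length + 1 - H.length) = H.reverse.tail := by
    have := congrArg (List.drop (W.length + 1)) hWH
    rwa [List.drop_append, List.drop_eq_nil_of_le (by omega), List.nil_append,
      List.drop_length_add_append, List.drop_one] at this
  have hPR : H.reverse.tail ++ R = R.tail ++ H.reverse := by
    have : H.reverse ++ R = R ++ H.reverse := append_flatten_replicate_comm _ _
    rw [← List.tail_append_of_ne_nil (by simpa using hH), this, List.tail_append_of_ne_nil hRne]
  refine two_le_occ (i := W.length + 1 - H.length) (j := W.length + 1) (by omega) (by simp) ?_ ?_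
  · rw [List.append_assoc, List.drop_append_of_le_length (by omega), hWdrop, ← List.append_assoc,
      hPR, List.append_assoc]
    exact hpR.trans (List.prefix_append _ _)
  · rw [drop_length_add_one_append_singleton hRne]
    exact hpR.trans (List.prefix_append _ _)

theorem isShortestUniquePrefix_tail_flatten_replicate {a : A} (hWH : H ++ W = W ++ H.reverse)
    (ha : H.getLast? = some a) (hba : b ≠ a) (hHW : H.length ≤ W.length + 1) (hd : 0 < d) :
    IsShortestUniquePrefix ((List.replicate d H.reverse).flatten.tail ++ [b])
      (W ++ (List.replicate d H.reverse).flatten ++ [b]) :=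
  ⟨by simp, occ_tail_flatten_replicate_eq_one hWH ha hba hd,
    fun _ hp hne => two_le_occ_of_prefix_tail_flatten_replicate hWH (by rintro rfl; simp at ha)
      hHW hd hp hne⟩

end ZivLempelStep

/-- The directive word `x` is `y_1^{d_1} y_2^{d_2} ⋯`, the `k`-th block occupying the positions
`N k + 1, …, N k + d k`. -/
structure IsBlockDecomp {α : Type*} (x y : ℕ → α) (d N : ℕ → ℕ) : Prop where
  start : N 1 = 0
  succ : ∀ k, 1 ≤ k → N (k + 1) = N k + d k
  pos : ∀ k, 1 ≤ k → 0 < d k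
  eq : ∀ k, 1 ≤ k → ∀ i, N k < i → i ≤ N k + d k → x i = y k

theorem isBlockDecomp_of_sum {α : Type*} {x y : ℕ → α} {d g : ℕ → ℕ}
    (hg : ∀ m, g m = (∑ i ∈ Finset.Icc 1 (m - 1), d i) + 1) (hd : ∀ m, 1 ≤ m → 0 < d m)
    (hx : ∀ m, 1 ≤ m → ∀ n, g m ≤ n → n < g (m + 1) → x n = y m) :
    IsBlockDecomp x y d (fun k => g k - 1) := by
  have hsucc : ∀ k, 1 ≤ k → g (k + 1) = g k + d k := by
    intro k hk
    obtain ⟨k, rfl⟩ : ∃ k', k = k' + 1 := ⟨k - 1, by omega⟩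
    rw [hg, hg, Nat.add_sub_cancel, Nat.add_sub_cancel, Finset.sum_Icc_succ_top (by omega)]
    ring
  have hpos : ∀ k, 1 ≤ g k := fun k => by rw [hg]; omega
  refine ⟨by simp [hg], fun k hk => ?_, hd, fun k hk i h1 h2 => hx k hk i ?_ ?_⟩
  all_goals have := hsucc k hk; have := hpos k; omega

namespace IsBlockDecomp

variable {x y : ℕ → A} {d N : ℕ → ℕ} {k : ℕ}

theorem hW_eq (hB : IsBlockDecomp x y d N) (hk : 1 ≤ k) : hW x (N k) = muW x (N k) [y k] := by
  rw [hW, hB.eq k hk _ (by omega) (by have := hB.pos k hk; omega)]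

theorem palW_succ (hB : IsBlockDecomp x y d N) (hk : 1 ≤ k) :
    palW x (N (k + 1)) = palW x (N k) ++ (List.replicate (d k) (hW x (N k)).reverse).flatten := by
  rw [hB.succ k hk, palW_add_of_forall_eq x (hB.eq k hk), ← hB.hW_eq hk]
  exact flatten_replicate_append_comm (muW_append_palW x _ _) _

theorem palW_append_prefix (hB : IsBlockDecomp x y d N) (hk : 1 ≤ k) :
    palW x (N k) ++ [y k] <+: palW x (N k + 1) := by
  rw [← hB.eq k hk (N k + 1) (by omega) (by have := hB.pos k hk; omega)]
  exact _root_.palW_append_prefix x _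

theorem isShortestUniquePrefix_succ (hB : IsBlockDecomp x y d N) (hk : 1 ≤ k)
    (hy : y (k + 1) ≠ y k) :
    IsShortestUniquePrefix
      ((List.replicate (d k) (hW x (N k)).reverse).flatten.tail ++ [y (k + 1)])
      (palW x (N (k + 1)) ++ [y (k + 1)]) := by
  obtain ⟨M, hM⟩ := exists_muW_eq_append_singleton x (N k) (y k)
  rw [hB.palW_succ hk]
  refine isShortestUniquePrefix_tail_flatten_replicate (muW_append_palW x _ _) (a := y k) ?_ hy
    (length_muW_le x _ _) (hB.pos k hk)
  simp [hB.hW_eq hk, hM]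

theorem cat_eq {z : ℕ → List A} (hB : IsBlockDecomp x y d N) (hz1 : z 1 = [y 1])
    (hz : ∀ k, 1 ≤ k →
      z (k + 1) = (List.replicate (d k) (hW x (N k)).reverse).flatten.tail ++ [y (k + 1)])
    (hk : 1 ≤ k) : cat z k = palW x (N k) ++ [y k] := by
  induction k, hk using Nat.le_induction with
  | base => rw [cat_one, hz1, hB.start]; rfl
  | succ k hk ih =>
    obtain ⟨M, hM⟩ := exists_muW_eq_append_singleton x (N k) (y k)
    obtain ⟨e, he⟩ : ∃ e, d k = e + 1 := ⟨d k - 1, by have := hB.pos k hk; omega⟩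
    rw [cat_succ, ih, hz k hk, hB.palW_succ hk, hB.hW_eq hk, hM, he]
    simp [List.replicate_succ]

end IsBlockDecomp

theorem z_factorization (x : ℕ → A) (u : ℕ → List A) (hu1 : u 1 = [])
    (hu : ∀ n : ℕ, 1 ≤ n → IsPalClosure (u n ++ [x n]) (u (n + 1))) (y : ℕ → A) (d : ℕ → ℕ) (g : ℕ → ℕ)
    (hy : ∀ m : ℕ, 1 ≤ m → y m ≠ y (m + 1)) (hd : ∀ m : ℕ, 1 ≤ m → 0 < d m)
    (hg : ∀ m : ℕ, g m = (∑ i ∈ Finset.Icc 1 (m - 1), d i) + 1)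
    (hx : ∀ m : ℕ, 1 ≤ m → ∀ n : ℕ, g m ≤ n → n < g (m + 1) → x n = y m) (s : ℕ → A) (hs : ∀ n : ℕ, 1 ≤ n → PrefInf (u n) s) (z : ℕ → List A)
    (hz1 : z 1 = [y 1])
    (hzk : ∀ k : ℕ, 2 ≤ k →
      z k = ((List.replicate (d (k - 1)) (hW x (g (k - 1) - 1)).reverse).flatten).tail
        ++ [y k]) :
    IsZFact s z := by
  have hB : IsBlockDecomp x y d (fun k => g k - 1) := isBlockDecomp_of_sum hg hd hx
  have hcat : ∀ k, 1 ≤ k → cat z k = palW x (g k - 1) ++ [y k] :=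
    fun k => hB.cat_eq hz1 fun k hk => hzk (k + 1) (by omega)
  have hfactor : ∀ m, 1 ≤ m → IsShortestUniquePrefix (z m) (cat z m) := by
    intro m hm
    obtain rfl | ⟨k, hk, rfl⟩ : m = 1 ∨ ∃ k, 1 ≤ k ∧ m = k + 1 :=
      (Nat.eq_or_lt_of_le hm).imp Eq.symm fun h => ⟨m - 1, by omega, by omega⟩
    · rw [cat_one, hz1]
      exact isShortestUniquePrefix_singleton _
    · rw [hcat (k + 1) hm, hzk (k + 1) (by omega), Nat.add_sub_cancel]
      exact hB.isShortestUniquePrefix_succ hk (hy k hk).symm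
  intro m hm
  obtain ⟨hne, hocc, hprefixes⟩ := hfactor m hm
  refine ⟨hne, ?_, hocc, hprefixes⟩
  rw [hcat m hm]
  exact (hs _ (by omega)).of_prefix
    (IsPalPrefixSeq.eq_palW ⟨hu1, hu⟩ (g m - 1 + 1) ▸ hB.palW_append_prefix hm)
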